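/- Fix an integer g ≥ 1 and a symmetric g×g complex matrix τ whose imaginary part is positive definite. Then the Riemann addition formula holds: for all z, w ∈ ℂ^g, θ(z + w)·θ(z − w) = ∑_{a ∈ {0,1}^g} Θ_a(z)·Θ_a(w), where the sum runs over the 2^g vectors a with entries in {0,1}. -/

import Mathlib

open Finset Complex

/-- The summand of the Riemann theta series:
`exp(πi·nᵀτn + 2πi·nᵀz)` for `n ∈ ℤ^g`. -/
noncomputable def riemannThetaTerm {g : ℕ} (τ : Matrix (Fin g) (Fin g) ℂ)
    (z : Fin g → ℂ) (n : Fin g → ℤ) : ℂ :=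
  Complex.exp ((Real.pi : ℂ) * Complex.I *
      (∑ i : Fin g, ∑ j : Fin g, (n i : ℂ) * τ i j * (n j : ℂ)) +
    2 * (Real.pi : ℂ) * Complex.I * ∑ i : Fin g, (n i : ℂ) * z i)

/-- The Riemann theta function `θ(z) = ∑_{n ∈ ℤ^g} exp(πi·nᵀτn + 2πi·nᵀz)`. -/
noncomputable def riemannTheta {g : ℕ} (τ : Matrix (Fin g) (Fin g) ℂ)
    (z : Fin g → ℂ) : ℂ :=
  ∑' n : Fin g → ℤ, riemannThetaTerm τ z n

/-- The second-order theta function with characteristic `a ∈ {0,1}^g`: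
`Θ_a(z) = ∑_{n ∈ ℤ^g} exp(2πi·(n+a/2)ᵀτ(n+a/2) + 4πi·(n+a/2)ᵀz)`. -/
noncomputable def theta2 {g : ℕ} (τ : Matrix (Fin g) (Fin g) ℂ)
    (a : Fin g → Fin 2) (z : Fin g → ℂ) : ℂ :=
  ∑' n : Fin g → ℤ,
    Complex.exp (2 * (Real.pi : ℂ) * Complex.I *
        (∑ i : Fin g, ∑ j : Fin g,
          ((n i : ℂ) + ((a i : ℕ) : ℂ) / 2) * τ i j * ((n j : ℂ) + ((a j : ℕ) : ℂ) / 2)) +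
      4 * (Real.pi : ℂ) * Complex.I *
        ∑ i : Fin g, ((n i : ℂ) + ((a i : ℕ) : ℂ) / 2) * z i)

/-!
Expand `θ(z + w) θ(z - w)` as a double series over `(m, n) ∈ ℤ^g × ℤ^g` and write uniquely
`m = r + s + a`, `n = r - s` with `a ∈ {0,1}^g` the parity of `m + n`. With `x = r + a/2` and
`y = s + a/2` we have `m = x + y`, `n = x - y`, so the parallelogram law for the quadratic form of
`τ` turns each product of terms into the `Θ_a(z)`-term at `r` times the `Θ_a(w)`-term at `s`.
Positive definiteness of `Im τ` dominates the theta series by a product of one-variable Jacobi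
theta series, and the resulting absolute convergence justifies the rearrangement.
-/

open Matrix

lemma exists_pos_mul_norm_sq_le {E : Type*} [NormedAddCommGroup E] [NormedSpace ℝ E]
    [FiniteDimensional ℝ E] {F : E → ℝ} (hF : Continuous F) (hpos : ∀ v, v ≠ 0 → 0 < F v)
    (hsmul : ∀ (t : ℝ) (v : E), F (t • v) = t ^ 2 * F v) :
    ∃ c > 0, ∀ v, c * ‖v‖ ^ 2 ≤ F v := by
  have hF0 : F 0 = 0 := by simpa using hsmul 0 0
  rcases subsingleton_or_nontrivial E with _ | _
  · exact ⟨1, one_pos, fun v => by simp [Subsingleton.elim v 0, hF0]⟩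
  obtain ⟨v₀, hv₀, hmin⟩ := (isCompact_sphere (0 : E) 1).exists_isMinOn
    (NormedSpace.sphere_nonempty.mpr zero_le_one) hF.continuousOn
  refine ⟨F v₀, hpos v₀ (ne_zero_of_mem_unit_sphere ⟨v₀, hv₀⟩), fun v => ?_⟩
  rcases eq_or_ne v 0 with rfl | hv
  · simp [hF0]
  have hmin_v : F v₀ ≤ ‖v‖⁻¹ ^ 2 * F v := by
    rw [← hsmul]
    exact hmin (by simp [norm_smul, hv])
  calc F v₀ * ‖v‖ ^ 2 ≤ ‖v‖⁻¹ ^ 2 * F v * ‖v‖ ^ 2 := by gcongr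
    _ = F v := by field_simp

lemma Matrix.PosDef.exists_pos_mul_sum_sq_le {ι : Type*} [Fintype ι] {Y : Matrix ι ι ℝ}
    (hY : Y.PosDef) : ∃ c > 0, ∀ v : ι → ℝ, c * ∑ i, v i ^ 2 ≤ v ⬝ᵥ Y *ᵥ v := by
  obtain ⟨c, hc, hle⟩ := exists_pos_mul_norm_sq_le (E := EuclideanSpace ℝ ι)
    (F := fun x => x.ofLp ⬝ᵥ Y *ᵥ x.ofLp) (by fun_prop)
    (fun v hv => by simpa using hY.dotProduct_mulVec_pos (x := v.ofLp) (by simpa using hv))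
    (fun t v => by
      simp only [WithLp.ofLp_smul, mulVec_smul, dotProduct_smul, smul_dotProduct, smul_eq_mul]
      ring)
  refine ⟨c, hc, fun v => ?_⟩
  simpa [EuclideanSpace.norm_sq_eq] using hle (WithLp.toLp 2 v)

lemma summable_fin_pi_prod {α : Type*} :
    ∀ {g : ℕ} {f : Fin g → α → ℝ}, (∀ i x, 0 ≤ f i x) → (∀ i, Summable (f i)) →
      Summable fun n : Fin g → α => ∏ i, f i (n i)
  | 0, _, _, _ => .of_finite
  | _ + 1, f, h0, hf => by
    have hprod := (hf 0).mul_of_nonneg (summable_fin_pi_prod (fun i => h0 i.succ)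
      fun i => hf i.succ) (h0 0) fun n => prod_nonneg fun i _ => h0 _ _
    exact (hprod.comp_injective (Fin.consEquiv fun _ => α).symm.injective).congr fun n => by
      simp [Fin.prod_univ_succ, Fin.tail]

lemma tsum_mul_tsum_of_summable_prod {ι κ K : Type*} [NormedDivisionRing K] [CompleteSpace K]
    {f : ι → K} {g : κ → K} (hfg : Summable fun x : ι × κ => f x.1 * g x.2) {i₀ : ι}
    (hi₀ : f i₀ ≠ 0) {k₀ : κ} (hk₀ : g k₀ ≠ 0) :
    (∑' x, f x) * ∑' y, g y = ∑' z : ι × κ, f z.1 * g z.2 := by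
  have hf : Summable fun i => f i * g k₀ := by
    simpa only [Function.comp_def] using hfg.comp_injective (Prod.mk_left_injective k₀)
  have hg : Summable fun k => f i₀ * g k := by
    simpa only [Function.comp_def] using hfg.comp_injective (Prod.mk_right_injective i₀)
  exact ((summable_mul_right_iff hk₀).mp hf).tsum_mul_tsum
    ((summable_mul_left_iff hi₀).mp hg) hfg

lemma parallelogram_law_sum_sum {ι R : Type*} [Fintype ι] [CommRing R] (A : Matrix ι ι R)
    (x y : ι → R) :
    ∑ i, ∑ j, (x i + y i) * A i j * (x j + y j) + ∑ i, ∑ j, (x i - y i) * A i j * (x j - y j) =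
      2 * ∑ i, ∑ j, x i * A i j * x j + 2 * ∑ i, ∑ j, y i * A i j * y j := by
  simp only [mul_sum, ← sum_add_distrib]
  exact sum_congr rfl fun i _ => sum_congr rfl fun j _ => by ring

def sumDiffEquiv (ι : Type*) :
    (ι → Fin 2) × (ι → ℤ) × (ι → ℤ) ≃ (ι → ℤ) × (ι → ℤ) where
  toFun q := (fun i => q.2.1 i + q.2.2 i + (q.1 i : ℕ), fun i => q.2.1 i - q.2.2 i)
  invFun p := (fun i => ⟨((p.1 i + p.2 i) % 2).toNat, by omega⟩,
    fun i => (p.1 i + p.2 i) / 2, fun i => (p.1 i - p.2 i) / 2)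
  left_inv := by
    rintro ⟨a, r, s⟩
    refine Prod.ext (funext fun i => Fin.ext ?_)
      (Prod.ext (funext fun i => ?_) (funext fun i => ?_))
    all_goals have := (a i).isLt; dsimp only; omega
  right_inv := by
    rintro ⟨m, n⟩
    refine Prod.ext (funext fun i => ?_) (funext fun i => ?_) <;> simp <;> omega

section

variable {g : ℕ} (τ : Matrix (Fin g) (Fin g) ℂ)

lemma norm_riemannThetaTerm (z : Fin g → ℂ) (n : Fin g → ℤ) :
    ‖riemannThetaTerm τ z n‖ = Real.exp (-(Real.pi * ∑ i, ∑ j, (n i : ℝ) * (τ i j).im * n j)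
      - 2 * Real.pi * ∑ i, (n i : ℝ) * (z i).im) := by
  rw [riemannThetaTerm, Complex.norm_exp]
  simp [Complex.mul_re, Complex.mul_im, Complex.im_sum, Complex.re_sum]
  ring

lemma norm_riemannThetaTerm_le {c : ℝ}
    (hc : ∀ v : Fin g → ℝ, c * ∑ i, v i ^ 2 ≤ ∑ i, ∑ j, v i * (τ i j).im * v j)
    (z : Fin g → ℂ) (n : Fin g → ℤ) :
    ‖riemannThetaTerm τ z n‖ ≤ ∏ i, ‖jacobiTheta₂_term (n i) (z i) (c * I)‖ := by
  simp only [norm_riemannThetaTerm, norm_jacobiTheta₂_term, ← Real.exp_sum, Real.exp_le_exp]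
  have hQ := mul_le_mul_of_nonneg_left (hc fun i => n i) Real.pi_pos.le
  calc _ ≤ -(Real.pi * (c * ∑ i, (n i : ℝ) ^ 2)) - 2 * Real.pi * ∑ i, (n i : ℝ) * (z i).im :=
        by linarith
    _ = _ := by simp [mul_sum, sum_sub_distrib]; ring_nf

lemma summable_norm_riemannThetaTerm (hτ : (Matrix.of fun i j => (τ i j).im).PosDef)
    (z : Fin g → ℂ) : Summable fun n => ‖riemannThetaTerm τ z n‖ := by
  obtain ⟨c, hc, hle⟩ := hτ.exists_pos_mul_sum_sq_le
  have hjacobi (i : Fin g) : Summable fun m : ℤ => ‖jacobiTheta₂_term m (z i) (c * I)‖ :=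
    ((summable_jacobiTheta₂_term_iff _ _).mpr (by simpa using hc)).norm
  refine (summable_fin_pi_prod (fun _ _ => norm_nonneg _) hjacobi).of_nonneg_of_le
    (fun _ => norm_nonneg _) (norm_riemannThetaTerm_le τ (fun v => ?_) z)
  simpa [dotProduct, mulVec, mul_sum, mul_assoc] using hle v

noncomputable def theta2Term (a : Fin g → Fin 2) (z : Fin g → ℂ) (n : Fin g → ℤ) : ℂ :=
  Complex.exp (2 * (Real.pi : ℂ) * Complex.I *
        (∑ i : Fin g, ∑ j : Fin g,
          ((n i : ℂ) + ((a i : ℕ) : ℂ) / 2) * τ i j * ((n j : ℂ) + ((a j : ℕ) : ℂ) / 2)) +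
      4 * (Real.pi : ℂ) * Complex.I *
        ∑ i : Fin g, ((n i : ℂ) + ((a i : ℕ) : ℂ) / 2) * z i)

lemma riemannThetaTerm_mul_riemannThetaTerm_sumDiffEquiv (z w : Fin g → ℂ)
    (q : (Fin g → Fin 2) × (Fin g → ℤ) × (Fin g → ℤ)) :
    riemannThetaTerm τ (z + w) (sumDiffEquiv _ q).1 *
        riemannThetaTerm τ (z - w) (sumDiffEquiv _ q).2 =
      theta2Term τ q.1 z q.2.1 * theta2Term τ q.1 w q.2.2 := by
  obtain ⟨a, r, s⟩ := q
  set x : Fin g → ℂ := fun i => r i + (a i : ℕ) / 2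
  set y : Fin g → ℂ := fun i => s i + (a i : ℕ) / 2
  have hm (i : Fin g) : ((r i + s i + (a i : ℕ) : ℤ) : ℂ) = x i + y i := by push_cast; ring
  have hn (i : Fin g) : ((r i - s i : ℤ) : ℂ) = x i - y i := by push_cast; ring
  have hlin : ∑ i, (x i + y i) * (z + w) i + ∑ i, (x i - y i) * (z - w) i =
      2 * ∑ i, x i * z i + 2 * ∑ i, y i * w i := by
    simp only [mul_sum, ← sum_add_distrib]
    exact sum_congr rfl fun i _ => by simp only [Pi.add_apply, Pi.sub_apply]; ring
  simp only [sumDiffEquiv, Equiv.coe_fn_mk, riemannThetaTerm, theta2Term, ← exp_add, hm, hn]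
  congr 1
  linear_combination (Real.pi : ℂ) * I * parallelogram_law_sum_sum τ x y +
    2 * (Real.pi : ℂ) * I * hlin

end

theorem riemann_addition_formula_general (g : ℕ)
    (τ : Matrix (Fin g) (Fin g) ℂ)
    (hτ' : (Matrix.of fun i j => (τ i j).im).PosDef) :
    ∀ z w : Fin g → ℂ,
      riemannTheta τ (z + w) * riemannTheta τ (z - w) =
        ∑ a : Fin g → Fin 2, theta2 τ a z * theta2 τ a w := by
  intro z w
  have hsum_add := summable_norm_riemannThetaTerm τ hτ' (z + w)
  have hsum_sub := summable_norm_riemannThetaTerm τ hτ' (z - w)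
  have hprod : Summable fun q : (Fin g → Fin 2) × (Fin g → ℤ) × (Fin g → ℤ) =>
      theta2Term τ q.1 z q.2.1 * theta2Term τ q.1 w q.2.2 := by
    have := (summable_mul_of_summable_norm hsum_add hsum_sub).comp_injective
      (sumDiffEquiv (Fin g)).injective
    simpa only [Function.comp_def, riemannThetaTerm_mul_riemannThetaTerm_sumDiffEquiv]
      using this
  rw [riemannTheta, riemannTheta, tsum_mul_tsum_of_summable_norm hsum_add hsum_sub,
    ← (sumDiffEquiv (Fin g)).tsum_eq]
  simp only [riemannThetaTerm_mul_riemannThetaTerm_sumDiffEquiv]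
  rw [hprod.tsum_prod' hprod.prod_factor, tsum_fintype]
  refine sum_congr rfl fun a _ => ?_
  exact (tsum_mul_tsum_of_summable_prod (f := theta2Term τ a z) (g := theta2Term τ a w)
    (hprod.prod_factor a) (i₀ := 0) (exp_ne_zero _) (k₀ := 0) (exp_ne_zero _)).symm

/-- Riemann's addition formula:
`θ(z + w)·θ(z − w) = ∑_{a ∈ {0,1}^g} Θ_a(z)·Θ_a(w)`. -/
theorem riemann_addition_formula (g : ℕ) (hg : 1 ≤ g)
    (τ : Matrix (Fin g) (Fin g) ℂ) (hτ : τ.IsSymm)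
    (hτ' : (Matrix.of fun i j => (τ i j).im).PosDef) :
    ∀ z w : Fin g → ℂ,
      riemannTheta τ (z + w) * riemannTheta τ (z - w) =
        ∑ a : Fin g → Fin 2, theta2 τ a z * theta2 τ a w :=
  riemann_addition_formula_general g τ hτ'
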